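/- (a) For all real t, x one has tanh(x−t) − tanh(x+t) = −2·sinh(2t)/(cosh(2x) + cosh(2t)). (b) On the open set Ω = {(t,x) ∈ ℝ² : t ≠ 0}, the function u(t,x) = −2·sinh(2t)/(cosh(2x) + cosh(2t)) is nonvanishing and satisfies the fast diffusion equation u_t = ∂/∂x (u_x / u). -/

import Mathlib

/-!
Part (a) is the subtraction formula for `tanh` combined with
`cosh (a + b) + cosh (a - b) = 2 cosh a cosh b`. For part (b) write `u (t, x) = rosenauSolution t x`.
Since `x` enters `u` only through the denominator, `u_x / u = rosenauSolution x t` is `u` with `t` and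
`x` exchanged, while `∂ₜ rosenauSolution t x = -4 (1 + cosh 2t cosh 2x) / (cosh 2t + cosh 2x)²` is
symmetric in `t` and `x`. Hence `∂ₓ (u_x / u)` is that same expression, which is `u_t`.
-/

/-- Partial derivative with respect to the first variable (time). -/
noncomputable def pt (u : ℝ × ℝ → ℝ) (p : ℝ × ℝ) : ℝ :=
  deriv (fun s => u (s, p.2)) p.1

/-- Partial derivative with respect to the second variable (space). -/
noncomputable def px (u : ℝ × ℝ → ℝ) (p : ℝ × ℝ) : ℝ :=
  deriv (fun y => u (p.1, y)) p.2

open Real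

lemma Real.cosh_add_add_cosh_sub (a b : ℝ) :
    cosh (a + b) + cosh (a - b) = 2 * cosh a * cosh b := by
  rw [cosh_add, cosh_sub]
  ring

lemma Real.tanh_sub_tanh (a b : ℝ) : tanh a - tanh b = sinh (a - b) / (cosh a * cosh b) := by
  rw [tanh_eq_sinh_div_cosh, tanh_eq_sinh_div_cosh,
    div_sub_div _ _ (cosh_pos a).ne' (cosh_pos b).ne', sinh_sub]

lemma Real.tanh_sub_sub_tanh_add (t x : ℝ) :
    tanh (x - t) - tanh (x + t) = -2 * sinh (2 * t) / (cosh (2 * x) + cosh (2 * t)) := by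
  have hdiff : x - t - (x + t) = -(2 * t) := by ring
  have hcosh := cosh_add_add_cosh_sub (x - t) (x + t)
  rw [show x - t + (x + t) = 2 * x by ring, hdiff, cosh_neg] at hcosh
  rw [tanh_sub_tanh, hdiff, sinh_neg, hcosh]
  field_simp

lemma Real.hasDerivAt_sinh_div_cosh_add {c : ℝ} (a : ℝ) (h : cosh a + c ≠ 0) :
    HasDerivAt (fun y => sinh y / (cosh y + c)) ((1 + c * cosh a) / (cosh a + c) ^ 2) a := by
  refine ((hasDerivAt_sinh a).div ((hasDerivAt_cosh a).add_const c) h).congr_deriv ?_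
  rw [← cosh_sq_sub_sinh_sq a]
  ring

noncomputable def rosenauSolution (t x : ℝ) : ℝ :=
  -2 * sinh (2 * t) / (cosh (2 * t) + cosh (2 * x))

lemma rosenauSolution_ne_zero {t : ℝ} (ht : t ≠ 0) (x : ℝ) : rosenauSolution t x ≠ 0 := by
  have hS : sinh (2 * t) ≠ 0 := by positivity
  unfold rosenauSolution
  positivity

lemma hasDerivAt_rosenauSolution_fst (t x : ℝ) :
    HasDerivAt (rosenauSolution · x)
      (-4 * (1 + cosh (2 * t) * cosh (2 * x)) / (cosh (2 * t) + cosh (2 * x)) ^ 2) t := by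
  have hD : cosh (2 * t) + cosh (2 * x) ≠ 0 := by positivity
  have hcomp := ((hasDerivAt_sinh_div_cosh_add (2 * t) hD).comp t
    ((hasDerivAt_id t).const_mul 2)).const_mul (-2)
  have heq : (rosenauSolution · x) = fun s => -2 * (sinh (2 * s) / (cosh (2 * s) + cosh (2 * x))) :=
    funext fun s => mul_div_assoc _ _ _
  rw [heq]
  exact hcomp.congr_deriv (by ring)

lemma hasDerivAt_rosenauSolution_snd (t x : ℝ) :
    HasDerivAt (rosenauSolution t)
      (4 * sinh (2 * t) * sinh (2 * x) / (cosh (2 * t) + cosh (2 * x)) ^ 2) x := by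
  have hD : cosh (2 * t) + cosh (2 * x) ≠ 0 := by positivity
  have hden : HasDerivAt (fun y => cosh (2 * t) + cosh (2 * y)) (2 * sinh (2 * x)) x := by
    simpa [mul_comm] using
      ((hasDerivAt_cosh (2 * x)).comp x ((hasDerivAt_id x).const_mul 2)).const_add (cosh (2 * t))
  exact ((hasDerivAt_const x (-2 * sinh (2 * t))).div hden hD).congr_deriv (by ring)

lemma deriv_rosenauSolution_snd_div {t : ℝ} (ht : t ≠ 0) (x : ℝ) :
    deriv (rosenauSolution t) x / rosenauSolution t x = rosenauSolution x t := by
  have hD : cosh (2 * t) + cosh (2 * x) ≠ 0 := by positivity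
  have hS : sinh (2 * t) ≠ 0 := by positivity
  rw [(hasDerivAt_rosenauSolution_snd t x).deriv]
  unfold rosenauSolution
  rw [add_comm (cosh (2 * x))]
  field_simp
  ring

theorem fast_diffusion_solution_tanh
    (u : ℝ × ℝ → ℝ)
    (hu : u = fun p =>
      -2 * Real.sinh (2 * p.1) / (Real.cosh (2 * p.2) + Real.cosh (2 * p.1)))
    (Ω : Set (ℝ × ℝ)) (hΩ : Ω = {p : ℝ × ℝ | p.1 ≠ 0}) :
    (∀ t x : ℝ, Real.tanh (x - t) - Real.tanh (x + t) =
      -2 * Real.sinh (2 * t) / (Real.cosh (2 * x) + Real.cosh (2 * t))) ∧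
    (∀ p ∈ Ω, u p ≠ 0 ∧ pt u p = px (fun q => px u q / u q) p) := by
  have hu' : u = fun p => rosenauSolution p.1 p.2 := by
    simp only [hu, rosenauSolution, add_comm]
  subst hu' hΩ
  refine ⟨tanh_sub_sub_tanh_add, ?_⟩
  rintro ⟨t, x⟩ (ht : t ≠ 0)
  refine ⟨rosenauSolution_ne_zero ht x, ?_⟩
  calc pt (fun p => rosenauSolution p.1 p.2) (t, x)
      = -4 * (1 + cosh (2 * t) * cosh (2 * x)) / (cosh (2 * t) + cosh (2 * x)) ^ 2 :=
        (hasDerivAt_rosenauSolution_fst t x).deriv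
    _ = -4 * (1 + cosh (2 * x) * cosh (2 * t)) / (cosh (2 * x) + cosh (2 * t)) ^ 2 := by ring
    _ = deriv (rosenauSolution · t) x := (hasDerivAt_rosenauSolution_fst x t).deriv.symm
    _ = px (fun q => px (fun p => rosenauSolution p.1 p.2) q / rosenauSolution q.1 q.2) (t, x) := by
        simp only [px, deriv_rosenauSolution_snd_div ht]
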